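/- arXiv:2112.14688 — 3 statements merged into one kernel-verified Lean document; each statement's English description precedes it below -/
import Mathlib

section
/- For the function f(z,z₀) = ½·tanh(z₀/2)·(cosh z − 1)/(2cosh²(z₀/2) + cosh z − 1), the quantity sup over z₀,g,W of |∫_{-W}^{W} f(z,z₀)/(z²+g²) dz| is bounded by a universal constant; in particular, for every z' > 0 it is at most (π/2)·√((cosh z' − 1)/(2z'²)) + 1/z'. -/
open Real

/-- The symmetrized Fermi-function integrand appearing in Lemma S1. -/
noncomputable def fermiSym (z z₀ : ℝ) : ℝ :=
  (1 / 2) * Real.tanh (z₀ / 2) * (Real.cosh z - 1) /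
    (2 * (Real.cosh (z₀ / 2)) ^ 2 + Real.cosh z - 1)

lemma sinh_le_mul_cosh {x : ℝ} (hx : 0 ≤ x) : Real.sinh x ≤ x * Real.cosh x := by
  have hd : ∀ y : ℝ, HasDerivAt (fun t : ℝ => t * Real.cosh t - Real.sinh t)
      (y * Real.sinh y) y := by
    intro y
    have h := ((hasDerivAt_id y).mul (Real.hasDerivAt_cosh y)).sub (Real.hasDerivAt_sinh y)
    rw [show (1 : ℝ) * Real.cosh y + id y * Real.sinh y - Real.cosh y = y * Real.sinh y from by simp only [id_eq]; ring] at h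
    exact h
  have hmono : MonotoneOn (fun t : ℝ => t * Real.cosh t - Real.sinh t) (Set.Ici 0) := by
    apply monotoneOn_of_deriv_nonneg (convex_Ici 0)
    · exact Continuous.continuousOn (by continuity)
    · exact fun y _ => (hd y).differentiableAt.differentiableWithinAt
    · intro y hy
      rw [interior_Ici] at hy
      rw [(hd y).deriv]
      exact mul_nonneg hy.le (Real.sinh_nonneg_iff.2 hy.le)
  have h0 := hmono Set.self_mem_Ici (Set.mem_Ici.2 hx) hx
  simp only [Real.cosh_zero, Real.sinh_zero, mul_one, zero_mul, sub_zero, zero_sub] at h0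
  linarith

lemma mul_sinh_le {a b : ℝ} (ha : 0 ≤ a) (hab : a ≤ b) : b * Real.sinh a ≤ a * Real.sinh b := by
  have hd : ∀ y : ℝ, HasDerivAt (fun t : ℝ => t * Real.sinh a - a * Real.sinh t)
      (Real.sinh a - a * Real.cosh y) y := by
    intro y
    have h := ((hasDerivAt_id y).mul_const (Real.sinh a)).sub
      ((Real.hasDerivAt_sinh y).const_mul a)
    rw [show 1 * Real.sinh a - a * Real.cosh y = Real.sinh a - a * Real.cosh y from by ring] at h
    exact h
  have hanti : AntitoneOn (fun t : ℝ => t * Real.sinh a - a * Real.sinh t) (Set.Ici a) := by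
    apply antitoneOn_of_deriv_nonpos (convex_Ici a)
    · exact Continuous.continuousOn (by continuity)
    · exact fun y _ => (hd y).differentiableAt.differentiableWithinAt
    · intro y hy
      rw [interior_Ici] at hy
      rw [(hd y).deriv]
      have h1 : Real.sinh a ≤ a * Real.cosh a := sinh_le_mul_cosh ha
      have h2 : Real.cosh a ≤ Real.cosh y := by
        rw [Real.cosh_le_cosh]
        rw [abs_of_nonneg ha, abs_of_nonneg (ha.trans hy.le)]
        exact hy.le
      nlinarith
  have h0 := hanti Set.self_mem_Ici (Set.mem_Ici.2 hab) hab
  simp only at h0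
  linarith

/-- monotonicity of `(cosh z - 1)/z²`. -/
lemma cosh_sub_one_mul_sq_le {z z' : ℝ} (hz : 0 ≤ z) (hzz : z ≤ z') :
    (Real.cosh z - 1) * z' ^ 2 ≤ (Real.cosh z' - 1) * z ^ 2 := by
  have key : ∀ x : ℝ, Real.cosh x - 1 = 2 * Real.sinh (x / 2) ^ 2 := by
    intro x
    have h := Real.cosh_two_mul (x / 2)
    rw [show 2 * (x / 2) = x from by ring] at h
    have h2 := Real.cosh_sq (x / 2)
    nlinarith
  rw [key z, key z']
  have h := mul_sinh_le (by positivity : (0:ℝ) ≤ z / 2) (by linarith : z / 2 ≤ z' / 2)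
  have hs : 0 ≤ Real.sinh (z / 2) := Real.sinh_nonneg_iff.2 (by positivity)
  have hs' : 0 ≤ Real.sinh (z' / 2) := Real.sinh_nonneg_iff.2 (by linarith)
  have hsq := mul_self_le_mul_self (mul_nonneg (by linarith) hs) h
  nlinarith [hsq]

lemma abs_tanh_le_one (x : ℝ) : |Real.tanh x| ≤ 1 := by
  rw [Real.tanh_eq_sinh_div_cosh, abs_div, abs_of_pos (Real.cosh_pos x),
    div_le_one (Real.cosh_pos x)]
  nlinarith [Real.cosh_sq x, sq_abs (Real.sinh x), abs_nonneg (Real.sinh x), Real.cosh_pos x]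

lemma fermi_denom_pos (x z₀ : ℝ) : 0 < 2 * (Real.cosh (z₀ / 2)) ^ 2 + Real.cosh x - 1 := by
  nlinarith [Real.one_le_cosh x, Real.one_le_cosh (z₀ / 2)]

lemma abs_fermiSym_le_half (x z₀ : ℝ) : |fermiSym x z₀| ≤ 1 / 2 := by
  have hD := fermi_denom_pos x z₀
  have hu : 0 ≤ Real.cosh x - 1 := by nlinarith [Real.one_le_cosh x]
  have hc : 1 ≤ Real.cosh (z₀ / 2) ^ 2 := by nlinarith [Real.one_le_cosh (z₀ / 2)]
  have ht := abs_tanh_le_one (z₀ / 2)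
  have ht0 := abs_nonneg (Real.tanh (z₀ / 2))
  unfold fermiSym
  rw [abs_div, abs_mul, abs_mul, abs_of_pos hD, abs_of_nonneg hu,
    show |(1:ℝ)/2| = 1/2 from by norm_num, div_le_iff₀ hD]
  nlinarith [mul_nonneg (sub_nonneg.2 ht) hu]

lemma bound_tail (z₀ g x : ℝ) (hx : x ≠ 0) :
    |fermiSym x z₀ / (x ^ 2 + g ^ 2)| ≤ (1 / 2) / x ^ 2 := by
  have hx2 : 0 < x ^ 2 := by positivity
  rw [abs_div, abs_of_pos (by positivity : (0:ℝ) < x ^ 2 + g ^ 2)]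
  exact div_le_div₀ (by norm_num) (abs_fermiSym_le_half x z₀) hx2 (by nlinarith [sq_nonneg g])

lemma bound_mid (z₀ g z z' : ℝ) (hg : 0 < g) (hz' : 0 < z') (hz : |z| ≤ z') :
    |fermiSym z z₀ / (z ^ 2 + g ^ 2)| ≤
      (1 / 2) / (z ^ 2 + 2 * z' ^ 2 / (Real.cosh z' - 1)) := by
  have hu' : 0 < Real.cosh z' - 1 := by
    have := Real.one_lt_cosh.2 (ne_of_gt hz'); linarith
  have hu : 0 ≤ Real.cosh z - 1 := by nlinarith [Real.one_le_cosh z]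
  have hc : 2 ≤ 2 * Real.cosh (z₀ / 2) ^ 2 := by nlinarith [Real.one_le_cosh (z₀ / 2)]
  have hD := fermi_denom_pos z z₀
  have hg2 : (0:ℝ) ≤ g ^ 2 := sq_nonneg g
  have hB : 0 < 2 * z' ^ 2 / (Real.cosh z' - 1) := by positivity
  have key : (Real.cosh z - 1) * z' ^ 2 ≤ (Real.cosh z' - 1) * z ^ 2 := by
    have h := cosh_sub_one_mul_sq_le (abs_nonneg z) hz
    rwa [Real.cosh_abs, sq_abs] at h
  have hB2 : (Real.cosh z - 1) * (2 * z' ^ 2 / (Real.cosh z' - 1)) ≤ 2 * z ^ 2 := by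
    rw [mul_div_assoc', div_le_iff₀ hu']
    nlinarith [key]
  have ht := abs_tanh_le_one (z₀ / 2)
  have ht0 := abs_nonneg (Real.tanh (z₀ / 2))
  have h1 : |fermiSym z z₀| ≤ (1 / 2) * (Real.cosh z - 1) /
      (2 * (Real.cosh (z₀ / 2)) ^ 2 + Real.cosh z - 1) := by
    unfold fermiSym
    rw [abs_div, abs_mul, abs_mul, abs_of_pos hD, abs_of_nonneg hu,
      show |(1:ℝ)/2| = 1/2 from by norm_num]
    exact (div_le_div_iff_of_pos_right hD).2 (by nlinarith [mul_nonneg (sub_nonneg.2 ht) hu])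
  have hzg : (0:ℝ) < z ^ 2 + g ^ 2 := by nlinarith [sq_nonneg z, pow_pos hg 2]
  have h2 : |fermiSym z z₀ / (z ^ 2 + g ^ 2)|
      = |fermiSym z z₀| / (z ^ 2 + g ^ 2) := by
    rw [abs_div, abs_of_pos hzg]
  rw [h2]
  have h3 : |fermiSym z z₀| / (z ^ 2 + g ^ 2) ≤
      ((1 / 2) * (Real.cosh z - 1) /
        (2 * (Real.cosh (z₀ / 2)) ^ 2 + Real.cosh z - 1)) / (z ^ 2 + g ^ 2) :=
    (div_le_div_iff_of_pos_right hzg).2 h1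
  refine h3.trans ?_
  rw [div_div, div_le_div_iff₀ (mul_pos hD hzg) (add_pos_of_nonneg_of_pos (sq_nonneg z) hB)]
  nlinarith [hB2, mul_nonneg hu hg2, mul_nonneg (le_trans (by norm_num) hc) hg2,
    mul_nonneg (by linarith : (0:ℝ) ≤ 2 * Real.cosh (z₀ / 2) ^ 2 - 2) (sq_nonneg z)]

lemma integral_half_inv_sq_add {k : ℝ} (hk : 0 < k) (a b : ℝ) :
    ∫ x in a..b, (1 / 2) / (x ^ 2 + k ^ 2)
      = (Real.arctan (b / k) - Real.arctan (a / k)) / k / 2 := by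
  have hkne : k ≠ 0 := ne_of_gt hk
  have hd : ∀ x : ℝ, HasDerivAt (fun x : ℝ => Real.arctan (x / k) / k / 2)
      ((1 / 2) / (x ^ 2 + k ^ 2)) x := by
    intro x
    have h1 : HasDerivAt (fun y : ℝ => y / k) (1 / k) x := by
      simpa using (hasDerivAt_id x).div_const k
    have h2 := (Real.hasDerivAt_arctan (x / k)).comp x h1
    have h3 := (h2.div_const k).div_const 2
    have heq : 1 / (1 + (x / k) ^ 2) * (1 / k) / k / 2 = (1 / 2) / (x ^ 2 + k ^ 2) := by
      have h4 : (0:ℝ) < x ^ 2 + k ^ 2 := by positivity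
      field_simp
      ring
    rwa [heq] at h3
  have hcont : Continuous fun x : ℝ => (1 / 2) / (x ^ 2 + k ^ 2) :=
    continuous_const.div (by continuity) (fun x => by positivity)
  rw [intervalIntegral.integral_eq_sub_of_hasDerivAt (fun x _ => hd x)
    (hcont.intervalIntegrable a b)]
  ring

lemma integral_half_inv_sq {a b : ℝ} (h : ∀ x ∈ Set.uIcc a b, x ≠ 0) :
    ∫ x in a..b, (1 / 2) / x ^ 2 = (a⁻¹ - b⁻¹) / 2 := by
  have hd : ∀ x ∈ Set.uIcc a b, HasDerivAt (fun x : ℝ => -x⁻¹ / 2)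
      ((1 / 2) / x ^ 2) x := by
    intro x hx
    have h1 := ((hasDerivAt_inv (h x hx)).neg).div_const 2
    have heq : - -(x ^ 2)⁻¹ / 2 = (1 / 2) / x ^ 2 := by
      rw [neg_neg]; ring
    rwa [heq] at h1
  have hcont : ContinuousOn (fun x : ℝ => (1 / 2) / x ^ 2) (Set.uIcc a b) := by
    apply ContinuousOn.div continuousOn_const (by fun_prop)
    intro x hx
    exact pow_ne_zero 2 (h x hx)
  rw [intervalIntegral.integral_eq_sub_of_hasDerivAt hd (hcont.intervalIntegrable)]
  ring

/-- The integral `∫_{-W}^{W} f(z,z₀)/(z²+g²) dz` is bounded, for every `z' > 0`, by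
`(π/2)·√((cosh z'-1)/(2 z'²)) + 1/z'`; in particular it is bounded by a universal constant. -/
theorem fermiSym_integral_bound (z₀ g W : ℝ) (hg : 0 < g) (hW : 0 < W)
    (z' : ℝ) (hz' : 0 < z') :
    |∫ z in (-W)..W, fermiSym z z₀ / (z ^ 2 + g ^ 2)|
      ≤ (π / 2) * Real.sqrt ((Real.cosh z' - 1) / (2 * z' ^ 2)) + 1 / z' := by
  have hu' : 0 < Real.cosh z' - 1 := by
    have := Real.one_lt_cosh.2 (ne_of_gt hz'); linarith
  set B : ℝ := 2 * z' ^ 2 / (Real.cosh z' - 1) with hBdef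
  have hB : 0 < B := by positivity
  set k : ℝ := Real.sqrt B with hkdef
  have hk : 0 < k := Real.sqrt_pos.2 hB
  have hk2 : k ^ 2 = B := Real.sq_sqrt hB.le
  -- identify the RHS constant
  have hsqrt : Real.sqrt ((Real.cosh z' - 1) / (2 * z' ^ 2)) = k⁻¹ := by
    rw [show (Real.cosh z' - 1) / (2 * z' ^ 2) = B⁻¹ from by rw [hBdef, inv_div],
      Real.sqrt_inv]
  rw [hsqrt]
  -- continuity and integrability of the integrand
  have hzg : ∀ x : ℝ, (0:ℝ) < x ^ 2 + g ^ 2 := fun x => by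
    nlinarith [sq_nonneg x, pow_pos hg 2]
  have hcF : Continuous fun z : ℝ => fermiSym z z₀ / (z ^ 2 + g ^ 2) := by
    apply Continuous.div
    · unfold fermiSym
      exact Continuous.div (by continuity) (by continuity)
        (fun x => ne_of_gt (fermi_denom_pos x z₀))
    · continuity
    · exact fun x => ne_of_gt (hzg x)
  have hInt : ∀ a b : ℝ, IntervalIntegrable
      (fun z : ℝ => |fermiSym z z₀ / (z ^ 2 + g ^ 2)|) MeasureTheory.volume a b :=
    fun a b => (hcF.abs).intervalIntegrable a b
  have hMcont : Continuous fun x : ℝ => (1 / 2) / (x ^ 2 + k ^ 2) :=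
    continuous_const.div (by continuity) (fun x => by positivity)
  -- middle estimate
  have mid : ∀ c d : ℝ, -z' ≤ c → c ≤ d → d ≤ z' →
      (∫ x in c..d, |fermiSym x z₀ / (x ^ 2 + g ^ 2)|) ≤ π / 2 * k⁻¹ := by
    intro c d h1 h2 h3
    have step1 : (∫ x in c..d, |fermiSym x z₀ / (x ^ 2 + g ^ 2)|)
        ≤ ∫ x in c..d, (1 / 2) / (x ^ 2 + k ^ 2) := by
      apply intervalIntegral.integral_mono_on h2 (hInt c d)
        (hMcont.intervalIntegrable c d)
      intro x hx
      have hxz : |x| ≤ z' := abs_le.2 ⟨by linarith [hx.1], by linarith [hx.2]⟩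
      rw [hk2]
      exact bound_mid z₀ g x z' hg hz' hxz
    refine step1.trans ?_
    rw [integral_half_inv_sq_add hk]
    have ha1 : Real.arctan (d / k) < π / 2 := Real.arctan_lt_pi_div_two _
    have ha2 : -(π / 2) < Real.arctan (c / k) := Real.neg_pi_div_two_lt_arctan _
    rw [div_div, div_le_iff₀ (by positivity)]
    have : π / 2 * k⁻¹ * (k * 2) = π := by field_simp
    linarith
  -- tail estimate
  have tail : ∀ c d : ℝ, c ≤ d → (∀ x ∈ Set.uIcc c d, x ≠ 0) →
      (∫ x in c..d, |fermiSym x z₀ / (x ^ 2 + g ^ 2)|) ≤ (c⁻¹ - d⁻¹) / 2 := by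
    intro c d hcd hne
    have step1 : (∫ x in c..d, |fermiSym x z₀ / (x ^ 2 + g ^ 2)|)
        ≤ ∫ x in c..d, (1 / 2) / x ^ 2 := by
      apply intervalIntegral.integral_mono_on hcd (hInt c d)
      · apply ContinuousOn.intervalIntegrable
        apply ContinuousOn.div continuousOn_const (by fun_prop)
        exact fun x hx => pow_ne_zero 2 (hne x hx)
      · intro x hx
        exact bound_tail z₀ g x (hne x (Set.mem_uIcc_of_le hx.1 hx.2))
    refine step1.trans ?_
    rw [integral_half_inv_sq hne]
  have habs : |∫ z in (-W)..W, fermiSym z z₀ / (z ^ 2 + g ^ 2)|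
      ≤ ∫ z in (-W)..W, |fermiSym z z₀ / (z ^ 2 + g ^ 2)| :=
    intervalIntegral.abs_integral_le_integral_abs (by linarith)
  refine habs.trans ?_
  rcases le_or_gt W z' with hWz | hWz
  · have := mid (-W) W (by linarith) (by linarith) hWz
    have hpos : 0 < 1 / z' := by positivity
    linarith
  · have hsplit : (∫ z in (-W)..W, |fermiSym z z₀ / (z ^ 2 + g ^ 2)|)
        = (∫ z in (-W)..(-z'), |fermiSym z z₀ / (z ^ 2 + g ^ 2)|)
          + (∫ z in (-z')..z', |fermiSym z z₀ / (z ^ 2 + g ^ 2)|)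
          + (∫ z in z'..W, |fermiSym z z₀ / (z ^ 2 + g ^ 2)|) := by
      rw [intervalIntegral.integral_add_adjacent_intervals (hInt (-W) (-z')) (hInt (-z') z'),
        intervalIntegral.integral_add_adjacent_intervals (hInt (-W) z') (hInt z' W)]
    rw [hsplit]
    have hmid := mid (-z') z' le_rfl (by linarith) le_rfl
    have htail1 : (∫ z in (-W)..(-z'), |fermiSym z z₀ / (z ^ 2 + g ^ 2)|)
        ≤ ((-W)⁻¹ - (-z')⁻¹) / 2 := by
      apply tail (-W) (-z') (by linarith)
      intro x hx
      rw [Set.uIcc_of_le (by linarith)] at hx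
      intro h0
      rw [h0] at hx
      have := hx.2
      linarith
    have htail2 : (∫ z in z'..W, |fermiSym z z₀ / (z ^ 2 + g ^ 2)|)
        ≤ (z'⁻¹ - W⁻¹) / 2 := by
      apply tail z' W (by linarith)
      intro x hx
      rw [Set.uIcc_of_le (by linarith)] at hx
      intro h0
      rw [h0] at hx
      have := hx.1
      linarith
    have h1 : ((-W)⁻¹ - (-z')⁻¹) / 2 ≤ 1 / (2 * z') := by
      rw [inv_neg, inv_neg]
      have hWpos : 0 < W⁻¹ := by positivity
      rw [show (1:ℝ) / (2 * z') = z'⁻¹ / 2 from by field_simp]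
      linarith
    have h2 : (z'⁻¹ - W⁻¹) / 2 ≤ 1 / (2 * z') := by
      have hWpos : 0 < W⁻¹ := by positivity
      rw [show (1:ℝ) / (2 * z') = z'⁻¹ / 2 from by field_simp]
      linarith
    have h3 : (1:ℝ) / (2 * z') + 1 / (2 * z') = 1 / z' := by field_simp; norm_num
    linarith
end

section
/- For 0 < α < 1, 0 < μ ≤ 1, the Kullback–Leibler divergence between Bernoulli(μα) and Bernoulli(α) satisfies D(μα‖α) ≥ (1 − μ + μ log μ)·α, where D(p‖p') = p log(p/p') + (1−p) log((1−p)/(1−p')). -/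
/-- Binary Kullback–Leibler divergence `D(p‖q) = p log(p/q) + (1−p) log((1−p)/(1−q))`. -/
noncomputable def klBin (p q : ℝ) : ℝ :=
  p * Real.log (p / q) + (1 - p) * Real.log ((1 - p) / (1 - q))

lemma log_ge_one_sub_inv {x : ℝ} (hx : 0 < x) : 1 - 1 / x ≤ Real.log x := by
  have h := Real.log_le_sub_one_of_pos (show (0:ℝ) < 1 / x by positivity)
  rw [Real.log_div one_ne_zero hx.ne', Real.log_one] at h
  linarith

/-- For `0 < α < 1` and `0 < μ ≤ 1`, `D(μα‖α) ≥ (1 − μ + μ log μ) α`. -/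
theorem klBin_scaled_lower_bound (α μ : ℝ) (hα0 : 0 < α) (hα1 : α < 1)
    (hμ0 : 0 < μ) (hμ1 : μ ≤ 1) :
    (1 - μ + μ * Real.log μ) * α ≤ klBin (μ * α) α := by
  have hμα : μ * α < 1 := lt_of_le_of_lt (by nlinarith) hα1
  have ha : (0:ℝ) < 1 - μ * α := by linarith
  have hb : (0:ℝ) < 1 - α := by linarith
  have hlog1 : Real.log (μ * α / α) = Real.log μ := by
    rw [mul_div_assoc, div_self hα0.ne', mul_one]
  have hkey : (1 - μ * α) * Real.log ((1 - μ * α) / (1 - α)) ≥ (1 - μ) * α := by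
    have h := log_ge_one_sub_inv (show (0:ℝ) < (1 - μ * α) / (1 - α) by positivity)
    have h2 : 1 / ((1 - μ * α) / (1 - α)) = (1 - α) / (1 - μ * α) := by
      field_simp
    rw [h2] at h
    have h3 : (1 - μ * α) * ((1 - α) / (1 - μ * α)) = 1 - α := by
      field_simp
    nlinarith [mul_le_mul_of_nonneg_left h ha.le]
  unfold klBin
  rw [hlog1]
  nlinarith
end

section
/- For β > 0 and γ > 0, splitting the binomial expansion: for any 0 < μ ≤ 1, 0 < α < 1, 0 < Δ ≤ 1 and integer k ≥ 1, Σ_{l=0}^{k} C(k,l) α^l (1−α)^{k−l} (1−Δ)^l ≤ exp(−(1−μ+μ log μ)·αk) + (1−Δ)^{⌈μαk⌉}. -/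
open Finset

/-- Splitting the binomial expansion: for `0 < μ ≤ 1`, `0 < α < 1`, `0 < Δ ≤ 1`, `k ≥ 1`,
`Σ_l C(k,l) α^l (1−α)^{k−l} (1−Δ)^l ≤ exp(−(1−μ+μ log μ) αk) + (1−Δ)^⌈μαk⌉`. -/
theorem binomial_split_bound (k : ℕ) (hk : 1 ≤ k) (μ α Δ : ℝ)
    (hμ0 : 0 < μ) (hμ1 : μ ≤ 1) (hα0 : 0 < α) (hα1 : α < 1)
    (hΔ0 : 0 < Δ) (hΔ1 : Δ ≤ 1) :
    ∑ l ∈ Finset.range (k + 1),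
        (k.choose l : ℝ) * α ^ l * (1 - α) ^ (k - l) * (1 - Δ) ^ l
      ≤ Real.exp (-(1 - μ + μ * Real.log μ) * (α * k)) + (1 - Δ) ^ ⌈μ * α * k⌉₊ := by
  set s := ⌈μ * α * k⌉₊ with hs
  have hΔ0' : (0:ℝ) ≤ 1 - Δ := by linarith
  have hΔ1' : (1:ℝ) - Δ ≤ 1 := by linarith
  have hα0' : (0:ℝ) ≤ 1 - α := by linarith
  have hμlog : Real.log μ ≤ 0 := Real.log_nonpos hμ0.le hμ1
  set E := Real.exp (-(μ * α * k * Real.log μ)) with hE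
  have hE0 : (0:ℝ) ≤ E := (Real.exp_pos _).le
  -- pointwise bound
  have key : ∀ l ∈ Finset.range (k+1),
      (k.choose l : ℝ) * α ^ l * (1 - α) ^ (k - l) * (1 - Δ) ^ l
      ≤ (k.choose l : ℝ) * (α*μ) ^ l * (1 - α) ^ (k - l) * E
        + (if s ≤ l then (k.choose l : ℝ) * α ^ l * (1 - α) ^ (k - l) * (1-Δ)^s else 0) := by
    intro l _
    by_cases h : s ≤ l
    · rw [if_pos h]
      have h1 : (1-Δ)^l ≤ (1-Δ)^s := pow_le_pow_of_le_one hΔ0' hΔ1' h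
      have h3 : (k.choose l : ℝ) * α ^ l * (1 - α) ^ (k - l) * (1 - Δ) ^ l
          ≤ (k.choose l : ℝ) * α ^ l * (1 - α) ^ (k - l) * (1-Δ)^s :=
        mul_le_mul_of_nonneg_left h1 (by positivity)
      have h2 : 0 ≤ (k.choose l : ℝ) * (α*μ) ^ l * (1 - α) ^ (k - l) * E := by positivity
      linarith
    · rw [if_neg h, add_zero]
      push_neg at h
      have hl' : (l:ℝ) ≤ μ * α * k := (Nat.lt_ceil.mp h).le
      have hμl : 1 ≤ μ ^ l * E := by
        have hpow : μ ^ l = Real.exp (l * Real.log μ) := by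
          rw [← Real.exp_log hμ0, ← Real.exp_nat_mul, Real.log_exp]
        rw [hpow, hE, ← Real.exp_add, ← Real.exp_zero]
        apply Real.exp_le_exp.mpr
        nlinarith [mul_nonneg (sub_nonneg.mpr hl') (neg_nonneg.mpr hμlog)]
      have hΔl : (1-Δ)^l ≤ 1 := pow_le_one₀ hΔ0' hΔ1'
      calc (k.choose l : ℝ) * α ^ l * (1 - α) ^ (k - l) * (1 - Δ) ^ l
          ≤ (k.choose l : ℝ) * α ^ l * (1 - α) ^ (k - l) * 1 :=
            mul_le_mul_of_nonneg_left hΔl (by positivity)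
        _ ≤ ((k.choose l : ℝ) * α ^ l * (1 - α) ^ (k - l)) * (μ ^ l * E) :=
            mul_le_mul_of_nonneg_left hμl (by positivity)
        _ = (k.choose l : ℝ) * (α*μ) ^ l * (1 - α) ^ (k - l) * E := by
            rw [mul_pow]; ring
  have hsum := Finset.sum_le_sum key
  rw [Finset.sum_add_distrib] at hsum
  refine hsum.trans (add_le_add ?_ ?_)
  · -- exponential part
    have h1 : ∑ l ∈ Finset.range (k+1),
        (k.choose l : ℝ) * (α*μ) ^ l * (1 - α) ^ (k - l) * E
        = (α*μ + (1-α))^k * E := by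
      rw [add_pow, Finset.sum_mul]
      apply Finset.sum_congr rfl
      intro l _; ring
    rw [h1]
    have hbase0 : (0:ℝ) ≤ α*μ + (1-α) := by nlinarith
    have hbase : α*μ + (1-α) ≤ Real.exp (α*(μ-1)) := by
      have := Real.add_one_le_exp (α*(μ-1))
      linarith
    have h2 : (α*μ + (1-α))^k ≤ Real.exp (α*(μ-1)) ^ k :=
      pow_le_pow_left₀ hbase0 hbase k
    calc (α*μ + (1-α))^k * E ≤ Real.exp (α*(μ-1)) ^ k * E :=
          mul_le_mul_of_nonneg_right h2 hE0
      _ = Real.exp (-(1 - μ + μ * Real.log μ) * (α * k)) := by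
          rw [← Real.exp_nat_mul, hE, ← Real.exp_add]
          congr 1; ring
  · -- tail part
    have h1 : ∀ l ∈ Finset.range (k+1),
        (if s ≤ l then (k.choose l : ℝ) * α ^ l * (1 - α) ^ (k - l) * (1-Δ)^s else 0)
        ≤ (k.choose l : ℝ) * α ^ l * (1 - α) ^ (k - l) * (1-Δ)^s := by
      intro l _
      split
      · exact le_rfl
      · positivity
    refine (Finset.sum_le_sum h1).trans ?_
    have h2 : ∑ l ∈ Finset.range (k+1),
        (k.choose l : ℝ) * α ^ l * (1 - α) ^ (k - l) * (1-Δ)^s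
        = (α + (1-α))^k * (1-Δ)^s := by
      rw [add_pow, Finset.sum_mul]
      apply Finset.sum_congr rfl
      intro l _; ring
    rw [h2]
    simp
end
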